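/- The action of SL(2, ℤ) on the torus 𝕋² = ℝ²/ℤ² induced by matrix multiplication on ℝ² is thick strong mixing: there exists a thick set N ⊆ SL(2, ℤ) such that for every pair of nonempty open sets U, V ⊆ 𝕋² there is a finite set F ⊆ N with γU ∩ V ≠ ∅ for all γ ∈ N \ F. -/

import Mathlib

open Pointwise

/-- A subset `N` of a group `G` is thick if for every finite subset `F ⊆ G`,
`N ∩ ⋂_{γ ∈ F} γN ≠ ∅`. -/
def IsThick {G : Type*} [Group G] (N : Set G) : Prop :=
  ∀ F : Finset G, (N ∩ ⋂ γ ∈ F, γ • N).Nonempty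

/-- The torus `𝕋² = ℝ²/ℤ²`, realized as the quotient of `Fin 2 → ℝ` by the integer
lattice (the subgroup of vectors with all coordinates in `ℤ·1`), with the quotient
topology. -/
abbrev Torus2 : Type :=
  (Fin 2 → ℝ) ⧸ (AddSubgroup.pi (Set.univ : Set (Fin 2)) fun _ => AddSubgroup.zmultiples (1 : ℝ))

/-- The quotient map `ℝ² → 𝕋²`. -/
def torusMk : (Fin 2 → ℝ) → Torus2 := QuotientAddGroup.mk

/-- The linear action of `γ ∈ SL(2, ℤ)` on `ℝ²` by matrix multiplication. -/
def sl2Vec (γ : Matrix.SpecialLinearGroup (Fin 2) ℤ) (v : Fin 2 → ℝ) : Fin 2 → ℝ :=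
  ((γ : Matrix (Fin 2) (Fin 2) ℤ).map (Int.cast : ℤ → ℝ)).mulVec v

/-- `slHits γ U V` says that `γU ∩ V ≠ ∅` for the induced action of `γ ∈ SL(2, ℤ)` on the
torus: since the quotient map is surjective, this holds iff some `v ∈ ℝ²` has `[v] ∈ U`
and `[γv] ∈ V`. -/
def slHits (γ : Matrix.SpecialLinearGroup (Fin 2) ℤ) (U V : Set Torus2) : Prop :=
  ∃ v : Fin 2 → ℝ, torusMk v ∈ U ∧ torusMk (sl2Vec γ v) ∈ V

/-!
The cat map `A = [[2, 1], [1, 1]]` stretches the direction `(φ, 1)` by `φ² > 1`, and lines of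
irrational slope are uniformly dense in the torus; hence for every `r > 0` all large powers `Aⁿ`
send a point of any `r`-ball to within `r` of any prescribed point. Composing with a fixed
`g ∈ SL(2, ℤ)` only costs `g`'s modulus of continuity, so `g Aⁿ` does the same once `n ≥ n(g, r)`.
Enumerating `SL(2, ℤ)` as `g₀, g₁, …`, the set `N` of all `g_k Aⁿ` with `n ≥ n(g_k, 1/(k+1))` is
thick (it contains `Aᵐ` and `γ⁻¹Aᵐ` for large `m`), and for given `U, V` only the finitely many
`g_k` with small `k` can fail, each for finitely many `n`.
-/

open Filter Matrix MatrixGroups Real goldenRatio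

section Thick

variable {G : Type*} [Group G]

theorem isThick_setOf_mul_pow (a : G) (n₀ : G → ℕ) :
    IsThick {γ | ∃ g n, n₀ g ≤ n ∧ g * a ^ n = γ} := by
  intro F
  set m := max (n₀ 1) (F.sup fun γ => n₀ γ⁻¹)
  refine ⟨a ^ m, ⟨1, m, le_max_left _ _, one_mul _⟩, Set.mem_iInter₂.2 fun γ hγ => ?_⟩
  rw [Set.mem_smul_set_iff_inv_smul_mem, smul_eq_mul]
  exact ⟨γ⁻¹, m, (Finset.le_sup (f := fun γ => n₀ γ⁻¹) hγ).trans (le_max_right _ _), rfl⟩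

theorem exists_isThick_forall_finite_setOf_not [Countable G] (a : G) {P : ℕ → G → Prop}
    (hP : ∀ ⦃j k⦄, j ≤ k → ∀ γ, P k γ → P j γ) (h : ∀ k g, ∀ᶠ n in atTop, P k (g * a ^ n)) :
    ∃ N : Set G, IsThick N ∧ ∀ k, {γ ∈ N | ¬ P k γ}.Finite := by
  obtain ⟨e, he⟩ := Countable.exists_injective_nat G
  choose n₀ hn₀ using fun g => eventually_atTop.1 (h (e g) g)
  refine ⟨_, isThick_setOf_mul_pow a n₀, fun k => ?_⟩
  have hfin : ∀ g, {n | ¬ P k (g * a ^ n)}.Finite := fun g => by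
    simpa [← Nat.cofinite_eq_atTop] using h k g
  refine (((Set.finite_Iio k).preimage he.injOn).biUnion fun g _ =>
    (hfin g).image (g * a ^ ·)).subset ?_
  rintro _ ⟨⟨g, n, hn, rfl⟩, hbad⟩
  have hgk : e g < k := not_le.1 fun hk => hbad (hP hk _ (hn₀ g n hn))
  exact Set.mem_biUnion hgk ⟨n, hbad, rfl⟩

end Thick

instance Matrix.SpecialLinearGroup.countable {n R : Type*} [Fintype n] [DecidableEq n]
    [CommRing R] [Countable R] : Countable (Matrix.SpecialLinearGroup n R) :=
  have : Countable (Matrix n n R) := inferInstanceAs (Countable (n → n → R))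
  Subtype.countable

theorem sl2Vec_mul (g h : SL(2, ℤ)) (v : Fin 2 → ℝ) :
    sl2Vec (g * h) v = sl2Vec g (sl2Vec h v) := by
  change (Int.castRingHom ℝ).mapMatrix (↑(g * h) : Matrix (Fin 2) (Fin 2) ℤ) *ᵥ v = _
  rw [Matrix.SpecialLinearGroup.coe_mul, map_mul, ← Matrix.mulVec_mulVec]
  rfl

theorem sl2Vec_one (v : Fin 2 → ℝ) : sl2Vec 1 v = v := by
  simp [sl2Vec]

theorem sl2Vec_inv_cancel (g : SL(2, ℤ)) (v : Fin 2 → ℝ) : sl2Vec g (sl2Vec g⁻¹ v) = v := by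
  rw [← sl2Vec_mul, mul_inv_cancel, sl2Vec_one]

theorem sl2Vec_add (g : SL(2, ℤ)) (v w : Fin 2 → ℝ) :
    sl2Vec g (v + w) = sl2Vec g v + sl2Vec g w :=
  Matrix.mulVec_add _ _ _

theorem sl2Vec_smul (g : SL(2, ℤ)) (c : ℝ) (v : Fin 2 → ℝ) :
    sl2Vec g (c • v) = c • sl2Vec g v :=
  Matrix.mulVec_smul _ _ _

theorem sl2Vec_intCast (g : SL(2, ℤ)) (k : Fin 2 → ℤ) :
    sl2Vec g (Int.cast ∘ k) = Int.cast ∘ ((g : Matrix (Fin 2) (Fin 2) ℤ) *ᵥ k) :=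
  funext fun i => (RingHom.map_mulVec (Int.castRingHom ℝ) _ k i).symm

theorem sl2Vec_pow_of_eq_smul {g : SL(2, ℤ)} {e : Fin 2 → ℝ} {c : ℝ} (he : sl2Vec g e = c • e)
    (n : ℕ) : sl2Vec (g ^ n) e = c ^ n • e := by
  induction n with
  | zero => rw [pow_zero, pow_zero, one_smul, sl2Vec_one]
  | succ n ih => rw [pow_succ, sl2Vec_mul, he, sl2Vec_smul, ih, smul_smul, pow_succ']

theorem uniformContinuous_sl2Vec (g : SL(2, ℤ)) : UniformContinuous (sl2Vec g) :=
  uniformContinuous_addMonoidHom_of_continuous (f := (Matrix.mulVecLin _).toAddMonoidHom)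
    (continuous_const.matrix_mulVec continuous_id)

theorem torusMk_add_intCast (x : Fin 2 → ℝ) (k : Fin 2 → ℤ) :
    torusMk (x + Int.cast ∘ k) = torusMk x :=
  QuotientAddGroup.mk_add_of_mem _
    ((AddSubgroup.mem_pi _).2 fun i _ => AddSubgroup.intCast_mem_zmultiples_one (k i))

/-- A uniform version of `slHits γ U V` for all pairs of `r`-balls `U`, `V` of the torus. -/
def HitsBalls (γ : SL(2, ℤ)) (r : ℝ) : Prop :=
  ∀ u w : Fin 2 → ℝ, ∃ v, dist v u < r ∧ ∃ k : Fin 2 → ℤ, dist (sl2Vec γ v + Int.cast ∘ k) w < r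

namespace HitsBalls

theorem mono {γ : SL(2, ℤ)} {r r' : ℝ} (h : HitsBalls γ r) (hr : r ≤ r') : HitsBalls γ r' :=
  fun u w => let ⟨v, hv, k, hk⟩ := h u w; ⟨v, hv.trans_le hr, k, hk.trans_le hr⟩

theorem slHits {γ : SL(2, ℤ)} {r : ℝ} (h : HitsBalls γ r) {U V : Set Torus2} {u w : Fin 2 → ℝ}
    (hU : Metric.ball u r ⊆ torusMk ⁻¹' U) (hV : Metric.ball w r ⊆ torusMk ⁻¹' V) :
    slHits γ U V :=
  let ⟨v, hv, k, hk⟩ := h u w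
  ⟨v, hU hv, torusMk_add_intCast (sl2Vec γ v) k ▸ hV hk⟩

/-- Pull the target back by `g⁻¹`: `g` maps integer vectors to integer vectors, and its uniform
continuity turns an `r'`-approximation into an `r`-approximation. -/
theorem exists_mul_left (g : SL(2, ℤ)) {r : ℝ} (hr : 0 < r) :
    ∃ r' > 0, ∀ γ, HitsBalls γ r' → HitsBalls (g * γ) r := by
  obtain ⟨ρ, hρ, hg⟩ := Metric.uniformContinuous_iff.1 (uniformContinuous_sl2Vec g) r hr
  refine ⟨min r ρ, lt_min hr hρ, fun γ h u w => ?_⟩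
  obtain ⟨v, hv, k, hk⟩ := h u (sl2Vec g⁻¹ w)
  refine ⟨v, hv.trans_le (min_le_left _ _), (g : Matrix (Fin 2) (Fin 2) ℤ) *ᵥ k, ?_⟩
  have := hg (hk.trans_le (min_le_right _ _))
  rwa [sl2Vec_add, sl2Vec_intCast, sl2Vec_inv_cancel, ← sl2Vec_mul] at this

theorem eventually_mul_left {ι : Type*} {l : Filter ι} {f : ι → SL(2, ℤ)}
    (h : ∀ r > 0, ∀ᶠ i in l, HitsBalls (f i) r) (g : SL(2, ℤ)) {r : ℝ} (hr : 0 < r) :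
    ∀ᶠ i in l, HitsBalls (g * f i) r :=
  let ⟨r', hr', hg⟩ := exists_mul_left g hr
  (h r' hr').mono fun _ => hg _

end HitsBalls

/-- Compactness of `ℝ/ℤ` makes the density of `ℤξ` there uniform in the bound on the multiplier. -/
theorem Irrational.exists_bounded_int_approx {ξ : ℝ} (hξ : Irrational ξ) {r : ℝ}
    (hr : 0 < r) : ∃ J : ℕ, ∀ x : ℝ, ∃ j k : ℤ, j.natAbs ≤ J ∧ |x - j * ξ - k| < r := by
  have hd : DenseRange (fun j : ℤ => j • (ξ : UnitAddCircle)) :=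
    AddCircle.denseRange_zsmul_coe_iff.2 (by simpa using hξ)
  obtain ⟨t, ht⟩ := isCompact_univ.elim_finite_subcover
    (fun j : ℤ => Metric.ball (j • (ξ : UnitAddCircle)) r) (fun _ => Metric.isOpen_ball)
    fun x _ => Set.mem_iUnion.2 (hd.exists_dist_lt x hr)
  refine ⟨t.sup Int.natAbs, fun x => ?_⟩
  obtain ⟨j, hj, hx⟩ := Set.mem_iUnion₂.1 (ht (Set.mem_univ (x : UnitAddCircle)))
  refine ⟨j, round (x - j * ξ), Finset.le_sup hj, ?_⟩
  rwa [Metric.mem_ball, dist_eq_norm, ← AddCircle.coe_zsmul, ← AddCircle.coe_sub, zsmul_eq_mul,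
    UnitAddCircle.norm_eq] at hx

theorem Irrational.exists_bounded_line_approx {ξ : ℝ} (hξ : Irrational ξ) {r : ℝ} (hr : 0 < r) :
    ∃ L : ℝ, ∀ q w : Fin 2 → ℝ, ∃ s, |s| ≤ L ∧
      ∃ k : Fin 2 → ℤ, dist (q + s • ![ξ, 1] + Int.cast ∘ k) w < r := by
  obtain ⟨J, hJ⟩ := hξ.exists_bounded_int_approx hr
  refine ⟨J + 1, fun q w => ?_⟩
  -- the second coordinate is matched exactly, the first up to `r` by the choice of `j`
  obtain ⟨j, k, hjJ, hjk⟩ := hJ (w 0 - q 0 - Int.fract (w 1 - q 1) * ξ)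
  refine ⟨Int.fract (w 1 - q 1) + j, ?_, ![k, ⌊w 1 - q 1⌋ - j], ?_⟩
  · have hj : |(j : ℝ)| ≤ J := by rw [← Int.cast_abs, Int.abs_eq_natAbs]; exact_mod_cast hjJ
    calc |Int.fract (w 1 - q 1) + j| ≤ |Int.fract (w 1 - q 1)| + |(j : ℝ)| := abs_add_le _ _
      _ ≤ J + 1 := by
        rw [abs_of_nonneg (Int.fract_nonneg _)]
        linarith [Int.fract_lt_one (w 1 - q 1)]
  · rw [dist_pi_lt_iff hr, Fin.forall_fin_two]
    simp only [Real.dist_eq, Pi.add_apply, Pi.smul_apply, smul_eq_mul, Function.comp_apply,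
      Matrix.cons_val_zero, Matrix.cons_val_one, Int.cast_sub]
    constructor
    · convert hjk using 1
      rw [← abs_neg]
      ring_nf
    · rw [Int.fract]
      ring_nf
      simpa using hr

theorem eventually_hitsBalls_pow {A : SL(2, ℤ)} {e : Fin 2 → ℝ} {c : ℝ} (he : sl2Vec A e = c • e)
    (hc : 1 < c) (hdense : ∀ r > 0, ∃ L : ℝ, ∀ q w : Fin 2 → ℝ, ∃ s, |s| ≤ L ∧
      ∃ k : Fin 2 → ℤ, dist (q + s • e + Int.cast ∘ k) w < r) {r : ℝ} (hr : 0 < r) :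
    ∀ᶠ n in atTop, HitsBalls (A ^ n) r := by
  obtain ⟨L, hL⟩ := hdense r hr
  filter_upwards [(tendsto_pow_atTop_atTop_of_one_lt hc).eventually_gt_atTop (L * ‖e‖ / r)]
    with n hn u w
  have hcn : 0 < c ^ n := pow_pos (zero_lt_one.trans hc) n
  obtain ⟨s, hs, k, hk⟩ := hL (sl2Vec (A ^ n) u) w
  refine ⟨u + (s / c ^ n) • e, ?_, k, ?_⟩
  · rw [dist_eq_norm, add_sub_cancel_left, norm_smul, Real.norm_eq_abs, abs_div,
      abs_of_pos hcn, div_mul_eq_mul_div, div_lt_iff₀ hcn]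
    rw [div_lt_iff₀ hr] at hn
    nlinarith [norm_nonneg e]
  · rwa [sl2Vec_add, sl2Vec_smul, sl2Vec_pow_of_eq_smul he, smul_smul,
      div_mul_cancel₀ _ hcn.ne']

def catMap : SL(2, ℤ) := ⟨!![2, 1; 1, 1], by simp [Matrix.det_fin_two_of]⟩

theorem sl2Vec_catMap : sl2Vec catMap ![φ, 1] = (φ + 1) • ![φ, 1] := by
  ext i
  fin_cases i <;> simp [sl2Vec, catMap, Matrix.mulVec, dotProduct, Fin.sum_univ_two]
  linear_combination -goldenRatio_sq

theorem eventually_hitsBalls_mul_catMap_pow (g : SL(2, ℤ)) {r : ℝ} (hr : 0 < r) :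
    ∀ᶠ n in atTop, HitsBalls (g * catMap ^ n) r :=
  HitsBalls.eventually_mul_left (fun _ hr => eventually_hitsBalls_pow sl2Vec_catMap
    (by linarith [goldenRatio_pos]) (fun _ => goldenRatio_irrational.exists_bounded_line_approx) hr) g hr

/-- The action of `SL(2, ℤ)` on the torus `𝕋² = ℝ²/ℤ²` is thick strong mixing: there is a
thick set `N ⊆ SL(2, ℤ)` such that for every pair of nonempty open `U, V ⊆ 𝕋²` there is a
finite `F ⊆ N` with `γU ∩ V ≠ ∅` for all `γ ∈ N \ F`. -/
theorem sl2_torus_thickStrongMixing :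
    ∃ N : Set (Matrix.SpecialLinearGroup (Fin 2) ℤ), IsThick N ∧
      ∀ U V : Set Torus2, IsOpen U → U.Nonempty → IsOpen V → V.Nonempty →
        ∃ F : Finset (Matrix.SpecialLinearGroup (Fin 2) ℤ), ↑F ⊆ N ∧
          ∀ γ ∈ N \ (↑F : Set (Matrix.SpecialLinearGroup (Fin 2) ℤ)), slHits γ U V := by
  obtain ⟨N, hN, hfin⟩ := exists_isThick_forall_finite_setOf_not catMap
    (P := fun k γ => HitsBalls γ (1 / (k + 1)))
    (fun j k hjk γ h => h.mono (Nat.one_div_le_one_div hjk))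
    (fun k g => eventually_hitsBalls_mul_catMap_pow g Nat.one_div_pos_of_nat)
  refine ⟨N, hN, fun U V hU ⟨x, hx⟩ hV ⟨y, hy⟩ => ?_⟩
  obtain ⟨u, rfl⟩ := QuotientAddGroup.mk_surjective x
  obtain ⟨w, rfl⟩ := QuotientAddGroup.mk_surjective y
  obtain ⟨ε, hε, hεU⟩ := Metric.isOpen_iff.1 (hU.preimage continuous_quot_mk) u hx
  obtain ⟨δ, hδ, hδV⟩ := Metric.isOpen_iff.1 (hV.preimage continuous_quot_mk) w hy
  obtain ⟨k, hk⟩ := exists_nat_one_div_lt (lt_min hε hδ)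
  refine ⟨(hfin k).toFinset, fun γ hγ => ((hfin k).mem_toFinset.1 hγ).1, fun γ ⟨hγN, hγF⟩ => ?_⟩
  have hγ : HitsBalls γ (1 / (k + 1)) := not_not.1 fun h => hγF ((hfin k).mem_toFinset.2 ⟨hγN, h⟩)
  exact hγ.slHits ((Metric.ball_subset_ball (hk.le.trans (min_le_left _ _))).trans hεU)
    ((Metric.ball_subset_ball (hk.le.trans (min_le_right _ _))).trans hδV)
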